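/- arXiv:2505.12179 — 5 statements merged into one kernel-verified Lean document; each statement's English description precedes it below -/
import Mathlib

section
/- For a nonzero symmetric traceless 3×3 real matrix Q with eigenvalues λ₁, λ₂, λ₃, the biaxiality parameter β(Q) = √6 · tr(Q³)/|Q|³ satisfies -1 ≤ β(Q) ≤ 1. -/
/-!
Diagonalise `Q`: its eigenvalues satisfy `a + b + c = 0`, with `|Q|² = a² + b² + c²` and
`tr(Q³) = a³ + b³ + c³`. Then `1 - β(Q)²` has the sign of
`(a² + b² + c²)³ - 6 (a³ + b³ + c³)² = 2 ((a - b)(b - c)(c - a))²`,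
twice the discriminant of the characteristic polynomial, which is nonnegative because the
eigenvalues are real.
-/

open Matrix

theorem Matrix.IsHermitian.trace_pow_eq_sum_eigenvalues_pow {𝕜 n : Type*} [RCLike 𝕜]
    [Fintype n] [DecidableEq n] {A : Matrix n n 𝕜} (hA : A.IsHermitian) (k : ℕ) :
    (A ^ k).trace = ∑ i, (hA.eigenvalues i : 𝕜) ^ k := by
  conv_lhs => rw [hA.spectral_theorem, ← map_pow, Unitary.conjStarAlgAut_apply, trace_mul_cycle,
    Unitary.coe_star_mul_self, one_mul, diagonal_pow, trace_diagonal]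
  rfl

theorem Matrix.trace_mul_transpose_self {m n R : Type*} [Fintype m] [Fintype n] [CommSemiring R]
    (A : Matrix m n R) : (A * Aᵀ).trace = ∑ i, ∑ j, A i j ^ 2 := by
  simp [trace, mul_apply, sq]

theorem six_mul_sum_cube_sq_le_sum_sq_cube {a b c : ℝ} (h : a + b + c = 0) :
    6 * (a ^ 3 + b ^ 3 + c ^ 3) ^ 2 ≤ (a ^ 2 + b ^ 2 + c ^ 2) ^ 3 := by
  have discr : (a ^ 2 + b ^ 2 + c ^ 2) ^ 3 - 6 * (a ^ 3 + b ^ 3 + c ^ 3) ^ 2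
      = 2 * ((a - b) * (b - c) * (c - a)) ^ 2 := by
    obtain rfl : c = -(a + b) := by linarith
    ring
  nlinarith [sq_nonneg ((a - b) * (b - c) * (c - a))]

/-- For `S ≤ 0` the left side is `0` because `√S = 0` and division by `0` gives `0`. -/
theorem abs_sqrt_six_mul_div_sqrt_pow_three_le_one {T S : ℝ} (h : 6 * T ^ 2 ≤ S ^ 3) :
    |√6 * T / √S ^ 3| ≤ 1 := by
  rcases le_or_gt S 0 with hS | hS
  · simp [Real.sqrt_eq_zero'.mpr hS]
  have hden : 0 < √S ^ 3 := by positivity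
  rw [abs_div, abs_of_pos hden, div_le_one hden]
  apply abs_le_of_sq_le_sq _ hden.le
  rw [mul_pow, Real.sq_sqrt (by norm_num), ← pow_mul, mul_comm 3, pow_mul, Real.sq_sqrt hS.le]
  exact h

theorem biaxiality_bounds_general (Q : Matrix (Fin 3) (Fin 3) ℝ)
    (hsym : Q.IsSymm) (htr : Q.trace = 0) :
    -1 ≤ Real.sqrt 6 * (Q * Q * Q).trace / (Real.sqrt (∑ i, ∑ j, (Q i j) ^ 2)) ^ 3 ∧
      Real.sqrt 6 * (Q * Q * Q).trace / (Real.sqrt (∑ i, ∑ j, (Q i j) ^ 2)) ^ 3 ≤ 1 := by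
  have hQ : Q.IsHermitian := isHermitian_iff_isSymm.mpr hsym
  set l := hQ.eigenvalues
  have trace_pow (k : ℕ) : (Q ^ k).trace = l 0 ^ k + l 1 ^ k + l 2 ^ k := by
    simpa [Fin.sum_univ_three] using hQ.trace_pow_eq_sum_eigenvalues_pow k
  have sum_eigenvalues : l 0 + l 1 + l 2 = 0 := by simpa [htr] using (trace_pow 1).symm
  have frobenius : ∑ i, ∑ j, Q i j ^ 2 = l 0 ^ 2 + l 1 ^ 2 + l 2 ^ 2 := by
    rw [← trace_mul_transpose_self, hsym.eq, ← sq, trace_pow]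
  rw [frobenius, ← pow_three', trace_pow]
  exact abs_le.mp (abs_sqrt_six_mul_div_sqrt_pow_three_le_one
    (six_mul_sum_cube_sq_le_sum_sq_cube sum_eigenvalues))

/-- The biaxiality parameter β(Q) = √6 tr(Q³)/|Q|³ of a nonzero symmetric traceless
3×3 real matrix lies in [-1, 1]. -/
theorem biaxiality_bounds (Q : Matrix (Fin 3) (Fin 3) ℝ)
    (hsym : Q.IsSymm) (htr : Q.trace = 0) (hne : Q ≠ 0) :
    -1 ≤ Real.sqrt 6 * (Q * Q * Q).trace / (Real.sqrt (∑ i, ∑ j, (Q i j) ^ 2)) ^ 3 ∧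
      Real.sqrt 6 * (Q * Q * Q).trace / (Real.sqrt (∑ i, ∑ j, (Q i j) ^ 2)) ^ 3 ≤ 1 :=
  biaxiality_bounds_general Q hsym htr
end

section
/- For a nonzero symmetric traceless 3×3 real matrix Q, β(Q) = 1 if and only if Q has two equal negative eigenvalues and one positive eigenvalue, i.e., Q/|Q| has eigenvalues √6/3, -√6/6, -√6/6. -/
/-!
Diagonalizing `Q` gives `tr (Q³) = ∑ λᵢ³` and `|Q|² = ∑ λᵢ²`. Since `∑ λᵢ = 0`, Newton's
identities say that every eigenvalue is a root of `t³ - (|Q|²/2) t - tr (Q³)/3`. Writing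
`|Q| = √6 q`, the condition `β(Q) = 1` reads `tr (Q³) = 6 q³`, and the cubic becomes
`(t - 2q)(t + q)²`. So every eigenvalue is `2q` or `-q`, and the trace being zero leaves exactly
one of them equal to `2q`.
-/

open Matrix Finset

namespace Matrix

lemma sum_sq_entries_pos {m n : Type*} [Fintype m] [Fintype n] {A : Matrix m n ℝ} (hA : A ≠ 0) :
    0 < ∑ i, ∑ j, A i j ^ 2 := by
  obtain ⟨i, j, hij⟩ : ∃ i j, A i j ≠ 0 := by
    by_contra! h
    exact hA (Matrix.ext h)
  exact sum_pos' (fun _ _ => by positivity)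
    ⟨i, mem_univ i, sum_pos' (fun _ _ => by positivity) ⟨j, mem_univ j, by positivity⟩⟩

namespace IsHermitian

variable {n : Type*} [Fintype n] [DecidableEq n]

lemma trace_pow_eq_sum_eigenvalues_pow_s1 {𝕜 : Type*} [RCLike 𝕜] {A : Matrix n n 𝕜}
    (hA : A.IsHermitian) (k : ℕ) : (A ^ k).trace = ∑ i, (hA.eigenvalues i : 𝕜) ^ k := by
  conv_lhs => rw [hA.spectral_theorem, ← map_pow, Unitary.conjStarAlgAut_apply, trace_mul_cycle,
    Unitary.coe_star_mul_self, Matrix.one_mul, diagonal_pow, trace_diagonal]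
  rfl

lemma sum_sq_entries_eq_trace_sq {A : Matrix n n ℝ} (hA : A.IsHermitian) :
    ∑ i, ∑ j, A i j ^ 2 = (A ^ 2).trace := by
  simp only [sq, trace, diag_apply, mul_apply]
  refine sum_congr rfl fun i _ => sum_congr rfl fun j _ => ?_
  rw [← hA.apply j i, star_trivial]

end IsHermitian

end Matrix

lemma six_mul_cube_eq_of_sum_eq_zero {R : Type*} [CommRing R] {μ : Fin 3 → R}
    (h0 : ∑ i, μ i = 0) (i : Fin 3) :
    6 * μ i ^ 3 = 3 * (∑ j, μ j ^ 2) * μ i + 2 * ∑ j, μ j ^ 3 := by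
  have h2 : μ 2 = -(μ 0 + μ 1) := by
    rw [Fin.sum_univ_three] at h0
    linear_combination h0
  fin_cases i <;>
    simp only [Fin.sum_univ_three, Fin.zero_eta, Fin.mk_one, Fin.reduceFinMk, h2] <;> ring

lemma eq_two_mul_or_eq_neg_of_cube_eq {R : Type*} [CommRing R] [IsDomain R] {x q : R}
    (h : x ^ 3 = 3 * q ^ 2 * x + 2 * q ^ 3) : x = 2 * q ∨ x = -q := by
  have hfactor : (x - 2 * q) * (x + q) ^ 2 = 0 := by linear_combination h
  rcases mul_eq_zero.mp hfactor with h | h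
  · exact Or.inl (sub_eq_zero.mp h)
  · exact Or.inr (eq_neg_of_add_eq_zero_left (pow_eq_zero_iff two_ne_zero |>.mp h))

lemma exists_eq_two_mul_of_sum_eq_zero {μ : Fin 3 → ℝ} {q : ℝ} (hq : 0 < q)
    (h0 : ∑ i, μ i = 0) (hμ : ∀ i, μ i = 2 * q ∨ μ i = -q) :
    ∃ i, μ i = 2 * q ∧ ∀ j ≠ i, μ j = -q := by
  have hshift : ∑ k, (μ k + q) = 3 * q := by simp [sum_add_distrib, h0]
  have hshift_nonneg : ∀ k, 0 ≤ μ k + q := fun k => by rcases hμ k with h | h <;> linarith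
  obtain ⟨i, hi⟩ : ∃ i, μ i = 2 * q := by
    by_contra! h
    have hall : ∀ k, μ k + q = 0 := fun k => by linarith [(hμ k).resolve_left (h k)]
    simp only [hall, sum_const_zero] at hshift
    linarith
  refine ⟨i, hi, fun j hji => (hμ j).resolve_left fun hj => ?_⟩
  have hpair : ∑ k ∈ {i, j}, (μ k + q) ≤ ∑ k, (μ k + q) :=
    sum_le_sum_of_subset_of_nonneg (subset_univ _) fun k _ _ => hshift_nonneg k
  rw [sum_pair hji.symm, hi, hj, hshift] at hpair
  linarith

lemma sum_cube_eq_iff_of_sum_eq_zero {μ : Fin 3 → ℝ} {q : ℝ} (hq : 0 < q)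
    (h0 : ∑ i, μ i = 0) (h2 : ∑ i, μ i ^ 2 = 6 * q ^ 2) :
    ∑ i, μ i ^ 3 = 6 * q ^ 3 ↔ ∃ i, μ i = 2 * q ∧ ∀ j ≠ i, μ j = -q := by
  constructor
  · intro h3
    refine exists_eq_two_mul_of_sum_eq_zero hq h0 fun i => eq_two_mul_or_eq_neg_of_cube_eq ?_
    linear_combination (six_mul_cube_eq_of_sum_eq_zero h0 i + 3 * μ i * h2 + 2 * h3) / 6
  · rintro ⟨i, hi, hj⟩
    have hcompl : ∑ j ∈ {i}ᶜ, μ j ^ 3 = ∑ j ∈ {i}ᶜ, (-q) ^ 3 :=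
      sum_congr rfl fun j hj' => by rw [hj j (mem_compl.mp hj' ∘ mem_singleton.mpr)]
    rw [Fintype.sum_eq_add_sum_compl i, hcompl, sum_const, card_compl, Fintype.card_fin,
      card_singleton, hi]
    norm_num
    ring

lemma sqrt_six_mul_sum_cube_div_eq_one_iff {μ : Fin 3 → ℝ} {s : ℝ} (hs : 0 < s)
    (h0 : ∑ i, μ i = 0) (h2 : s ^ 2 = ∑ i, μ i ^ 2) :
    (√6 * ∑ i, μ i ^ 3) / s ^ 3 = 1 ↔
      ∃ i, μ i = s * (√6 / 3) ∧ ∀ j ≠ i, μ j = -(s * (√6 / 6)) := by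
  have hr : √6 ^ 2 = 6 := Real.sq_sqrt (by norm_num)
  set q := s * (√6 / 6)
  have hq : 0 < q := by positivity
  have h2q : s * (√6 / 3) = 2 * q := by ring
  rw [h2q, ← sum_cube_eq_iff_of_sum_eq_zero hq h0 (by linear_combination -h2 - s ^ 2 / 6 * hr),
    div_eq_one_iff_eq (by positivity)]
  constructor
  · intro h
    linear_combination (√6 / 6) * h - (∑ i, μ i ^ 3) / 6 * hr - s ^ 3 / 36 * √6 * hr
  · intro h
    linear_combination √6 * h + s ^ 3 / 36 * (6 + √6 ^ 2) * hr

/-- β(Q) = 1 iff the eigenvalues of Q/|Q| are √6/3 (simple) and -√6/6 (double). -/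
theorem biaxiality_eq_one_iff (Q : Matrix (Fin 3) (Fin 3) ℝ)
    (hQ : Q.IsHermitian) (htr : Q.trace = 0) (hne : Q ≠ 0) :
    Real.sqrt 6 * (Q * Q * Q).trace / (Real.sqrt (∑ k, ∑ l, (Q k l) ^ 2)) ^ 3 = 1 ↔
      ∃ i : Fin 3,
        hQ.eigenvalues i = Real.sqrt (∑ k, ∑ l, (Q k l) ^ 2) * (Real.sqrt 6 / 3) ∧
        ∀ j : Fin 3, j ≠ i →
          hQ.eigenvalues j = -(Real.sqrt (∑ k, ∑ l, (Q k l) ^ 2) * (Real.sqrt 6 / 6)) := by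
  have htrace_pow (k : ℕ) : (Q ^ k).trace = ∑ i, hQ.eigenvalues i ^ k := by
    simpa using hQ.trace_pow_eq_sum_eigenvalues_pow_s1 k
  have hsum : ∑ i, hQ.eigenvalues i = 0 := by simpa [htr] using (htrace_pow 1).symm
  have hpos := sum_sq_entries_pos hne
  rw [← pow_three', htrace_pow]
  refine sqrt_six_mul_sum_cube_div_eq_one_iff (Real.sqrt_pos.mpr hpos) hsum ?_
  rw [Real.sq_sqrt hpos.le, hQ.sum_sq_entries_eq_trace_sq, htrace_pow]
end

section
/- Let s, r, δ be real numbers satisfying s + r + δ = 0 and s² + r² + δ² + (√6/3)(s + r - 2δ) = 0 with δ ≥ 0 small and s ≥ 0 ≥ r. Then s = (3/2)^{1/4}√δ - δ/2 + O(δ^{3/2}) and r = -(3/2)^{1/4}√δ - δ/2 + O(δ^{3/2}); in particular there is a constant C > 0 such that |s - (3/2)^{1/4}√δ + δ/2| ≤ C δ^{3/2} for all sufficiently small δ ≥ 0. -/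
/-!
Since `s + r = -δ`, the constraint only involves the gap `s - r`, and reads
`(s - r)² = 2√6 δ - 3δ²`. With `a = 2 (3/2)^{1/4} √δ` this is `(s - r)² = (1 - a²/8) a²`,
so `s - r = a √(1 - a²/8)` differs from `a` by at most `a³/8 = O(δ^{3/2})`, while
`s = ((s - r) - δ)/2` and `r = -((s - r) + δ)/2`.
-/

open Real

lemma abs_sub_le_mul_of_sq_eq {a b c : ℝ} (ha : 0 ≤ a) (hb : 0 ≤ b) (hc : 0 ≤ c)
    (h : b ^ 2 = (1 - c) * a ^ 2) : |a - b| ≤ c * a := by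
  have hba : b ≤ a := pow_le_pow_iff_left₀ hb ha two_ne_zero |>.mp (by nlinarith)
  rw [abs_of_nonneg (sub_nonneg.mpr hba)]
  rcases ha.eq_or_lt with rfl | ha
  · simp [le_antisymm hba hb]
  · have : a * (a - b) ≤ a * (c * a) := by nlinarith
    exact le_of_mul_le_mul_left this ha

lemma three_halves_rpow_quarter_sq : ((3 / 2 : ℝ) ^ ((1 : ℝ) / 4)) ^ 2 = √6 / 2 := by
  rw [← rpow_mul_natCast (by norm_num), show (1 : ℝ) / 4 * (2 : ℕ) = 1 / 2 by norm_num,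
    ← sqrt_eq_rpow, show (6 : ℝ) = 2 ^ 2 * (3 / 2) by norm_num, sqrt_mul (by norm_num),
    sqrt_sq (by norm_num)]
  ring

lemma rpow_three_halves {δ : ℝ} (hδ : 0 ≤ δ) : δ ^ ((3 : ℝ) / 2) = √δ ^ 3 := by
  rw [sqrt_eq_rpow, ← rpow_mul_natCast hδ]
  norm_num

lemma sq_sub_eq_of_traceless_unit {s r δ : ℝ} (hsum : s + r + δ = 0)
    (hnorm : s ^ 2 + r ^ 2 + δ ^ 2 + (√6 / 3) * (s + r - 2 * δ) = 0) (hδ : 0 ≤ δ) :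
    let a := 2 * (3 / 2 : ℝ) ^ ((1 : ℝ) / 4) * √δ
    (s - r) ^ 2 = (1 - a ^ 2 / 8) * a ^ 2 := by
  intro a
  have ha : a ^ 2 = 2 * √6 * δ := by
    simp only [a, mul_pow, three_halves_rpow_quarter_sq, sq_sqrt hδ]
    ring
  have h6 : √6 ^ 2 = 6 := sq_sqrt (by norm_num)
  rw [ha]
  have hr : r = -s - δ := by linarith
  subst hr
  linear_combination 2 * hnorm + δ ^ 2 * h6 / 2

/-- Asymptotics of s near the negative uniaxial state:
s = (3/2)^{1/4} √δ - δ/2 + O(δ^{3/2}). -/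
theorem s_asymptotics :
    ∃ C > (0 : ℝ), ∃ δ₀ > (0 : ℝ), ∀ s r δ : ℝ,
      s + r + δ = 0 →
      s ^ 2 + r ^ 2 + δ ^ 2 + (Real.sqrt 6 / 3) * (s + r - 2 * δ) = 0 →
      0 ≤ s → r ≤ 0 → 0 ≤ δ → δ ≤ δ₀ →
      |s - (3 / 2 : ℝ) ^ ((1 : ℝ) / 4) * Real.sqrt δ + δ / 2| ≤
        C * δ ^ ((3 : ℝ) / 2) ∧
      |r + (3 / 2 : ℝ) ^ ((1 : ℝ) / 4) * Real.sqrt δ + δ / 2| ≤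
        C * δ ^ ((3 : ℝ) / 2) := by
  set E := (3 / 2 : ℝ) ^ ((1 : ℝ) / 4)
  have hE : 0 ≤ E := by positivity
  refine ⟨E ^ 3 / 2, by positivity, 1, one_pos, fun s r δ hsum hnorm hs hr hδ _ => ?_⟩
  have hgap : |2 * E * √δ - (s - r)| ≤ E ^ 3 * δ ^ ((3 : ℝ) / 2) := by
    have : |2 * E * √δ - (s - r)| ≤ (2 * E * √δ) ^ 2 / 8 * (2 * E * √δ) :=
      abs_sub_le_mul_of_sq_eq (by positivity) (by linarith) (by positivity)
        (sq_sub_eq_of_traceless_unit hsum hnorm hδ)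
    rw [rpow_three_halves hδ]
    linarith
  have hs' : s - E * √δ + δ / 2 = -(2 * E * √δ - (s - r)) / 2 := by linear_combination hsum / 2
  have hr' : r + E * √δ + δ / 2 = (2 * E * √δ - (s - r)) / 2 := by linear_combination hsum / 2
  simp only [hs', hr', abs_div, abs_neg, abs_two]
  constructor <;> linarith
end

section
/- Let Q be a symmetric traceless unit-norm 3×3 matrix with eigenvalues λ₁ = √6/6 + s, λ₂, λ₃ where λ₁ ≥ λ₂ ≥ λ₃, λ₁+λ₂+λ₃ = 0 and λ₁²+λ₂²+λ₃² = 1. Then β(Q) = -1 + 9s² + ζ(s) with |ζ(s)| ≤ C s³ for s small; in particular β(Q) = -1 + (9/2)|U|² + O(|U|³) where |U|² = 2s². -/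
/-!
For a traceless triple, `l₁³ + l₂³ + l₃³ = 3 l₁ l₂ l₃`, and the two constraints give
`l₂ l₃ = l₁² - 1/2`, so `β` is the cubic `√6 (3 l₁³ - 3 l₁ / 2)` in `l₁` alone. Expanding it at
`l₁ = √6/6` gives exactly `β = -1 + 9 s² + 3√6 s³`, so `ζ(s) = 3√6 s³`. Finally
`(l₁ - l₂)(l₁ - l₃) = 3 l₁² - 1/2`, so the ordering forces `l₁ ≥ √6/6`, i.e. `s ≥ 0`.
-/

namespace Biaxiality

variable {l1 l2 l3 : ℝ}

theorem cube_sum_eq_three_mul_of_add_eq_zero {R : Type*} [CommRing R] {a b c : R}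
    (h : a + b + c = 0) : a ^ 3 + b ^ 3 + c ^ 3 = 3 * a * b * c := by
  have hc : c = -a - b := by linear_combination h
  subst hc
  ring

theorem mul_eq_sq_sub_half (hsum : l1 + l2 + l3 = 0) (hsq : l1 ^ 2 + l2 ^ 2 + l3 ^ 2 = 1) :
    l2 * l3 = l1 ^ 2 - 1 / 2 := by
  linear_combination (l2 + l3 - l1) / 2 * hsum - hsq / 2

theorem sqrt_six_div_six_le (h12 : l1 ≥ l2) (h23 : l2 ≥ l3) (hsum : l1 + l2 + l3 = 0)
    (hsq : l1 ^ 2 + l2 ^ 2 + l3 ^ 2 = 1) : Real.sqrt 6 / 6 ≤ l1 := by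
  have hgap : (l1 - l2) * (l1 - l3) = 3 * l1 ^ 2 - 1 / 2 := by
    linear_combination -l1 * hsum + mul_eq_sq_sub_half hsum hsq
  have hl1 : 1 / 6 ≤ l1 ^ 2 := by
    linarith [mul_nonneg (sub_nonneg.2 h12) (by linarith : 0 ≤ l1 - l3)]
  have hsqrt : Real.sqrt 6 / 6 = Real.sqrt (1 / 6) := by
    rw [show (1 : ℝ) / 6 = 6 / 6 ^ 2 by norm_num, Real.sqrt_div' _ (by norm_num),
      Real.sqrt_sq (by norm_num)]
  rw [hsqrt]
  exact Real.sqrt_le_iff.2 ⟨by linarith, hl1⟩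

theorem sqrt_six_mul_cube_sum_eq (hsum : l1 + l2 + l3 = 0)
    (hsq : l1 ^ 2 + l2 ^ 2 + l3 ^ 2 = 1) :
    Real.sqrt 6 * (l1 ^ 3 + l2 ^ 3 + l3 ^ 3) =
      -1 + 9 * (l1 - Real.sqrt 6 / 6) ^ 2 + 3 * Real.sqrt 6 * (l1 - Real.sqrt 6 / 6) ^ 3 := by
  have hr : Real.sqrt 6 ^ 2 = 6 := Real.sq_sqrt (by norm_num)
  rw [cube_sum_eq_three_mul_of_add_eq_zero hsum]
  linear_combination 3 * Real.sqrt 6 * l1 * mul_eq_sq_sub_half hsum hsq +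
    (3 * l1 ^ 2 / 2 - l1 * Real.sqrt 6 / 4 + Real.sqrt 6 ^ 2 / 72 - 1 / 6) * hr

end Biaxiality

open Biaxiality in
/-- For eigenvalues λ₁ ≥ λ₂ ≥ λ₃ of a unit-norm traceless symmetric matrix,
with s = λ₁ - √6/6, one has β = -1 + 9 s² + ζ(s) with |ζ(s)| ≤ C s³;
equivalently β = -1 + (9/2)|U|² + O(|U|³) with |U|² = 2 s². -/
theorem biaxiality_expansion_near_neg_uniaxial :
    ∃ C > (0 : ℝ), ∃ s₀ > (0 : ℝ), ∀ l1 l2 l3 : ℝ,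
      l1 ≥ l2 → l2 ≥ l3 →
      l1 + l2 + l3 = 0 → l1 ^ 2 + l2 ^ 2 + l3 ^ 2 = 1 →
      l1 - Real.sqrt 6 / 6 ≤ s₀ →
      |Real.sqrt 6 * (l1 ^ 3 + l2 ^ 3 + l3 ^ 3) -
          (-1 + 9 * (l1 - Real.sqrt 6 / 6) ^ 2)| ≤
        C * (l1 - Real.sqrt 6 / 6) ^ 3 := by
  refine ⟨3 * Real.sqrt 6, by positivity, 1, one_pos, ?_⟩
  intro l1 l2 l3 h12 h23 hsum hsq _
  have hs : 0 ≤ l1 - Real.sqrt 6 / 6 := sub_nonneg.2 (sqrt_six_div_six_le h12 h23 hsum hsq)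
  rw [sqrt_six_mul_cube_sum_eq hsum hsq, add_sub_cancel_left, abs_of_nonneg (by positivity)]
end

section
/- Let p₀ ∈ 𝕊² and V ∈ ℝ^{3×3}. Define Y := V - V(p₀⊗p₀) - (p₀⊗p₀)V + (V : p₀⊗p₀)(p₀⊗p₀) - ((V : (Id - p₀⊗p₀))/2)(Id - p₀⊗p₀), where A : B := Σᵢⱼ AᵢⱼBᵢⱼ. If V is symmetric, then Y is the orthogonal projection (with respect to the Frobenius inner product) of V onto the subspace 𝒰_{p₀} = {U symmetric, tr U = 0, U p₀ = 0}; in particular V : Q = Y : Q for every Q ∈ 𝒰_{p₀}, and Y ∈ 𝒰_{p₀}. -/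
/-!
For a symmetric `Q` the Frobenius pairing `A : Q` is `tr (A Q)`. If moreover `Q p = 0`, then
`P = p ⊗ p` satisfies `Q P = P Q = 0`, so against `Q` every correction term of `Y` vanishes except
the multiple of `1 - P`, which contributes `tr Q = 0`. The coefficients of `P` and `1 - P` are
chosen exactly so that `Y p = 0` and `tr Y = 0`.
-/

open Matrix

namespace Matrix

variable {n R : Type*} [Fintype n]

theorem IsSymm.sum_sum_mul_eq_trace_mul [NonUnitalNonAssocSemiring R] {A : Matrix n n R}
    (hA : A.IsSymm) (B : Matrix n n R) : ∑ i, ∑ j, A i j * B i j = (A * B).trace := by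
  simp only [trace, diag, mul_apply]
  rw [Finset.sum_comm]
  simp only [hA.apply]

theorem vecMulVec_self_mulVec_self [Semiring R] {p : n → R} (hp : p ⬝ᵥ p = 1) :
    vecMulVec p p *ᵥ p = p := by
  rw [vecMulVec_mulVec, hp, MulOpposite.op_one, one_smul]

theorem trace_mul_vecMulVec_self [CommSemiring R] (V : Matrix n n R) (p : n → R) :
    (V * vecMulVec p p).trace = p ⬝ᵥ V *ᵥ p := by
  rw [mul_vecMulVec, trace_vecMulVec, dotProduct_comm]

variable [DecidableEq n] [Field R]

/-- The paper's `Y` in any dimension: the pairings `V : P` and `V : (1 - P)` become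
`p ⬝ᵥ V p` and `tr V - p ⬝ᵥ V p`, and the `2` of dimension 3 becomes `card n - 1`. -/
def projUp (p : n → R) (V : Matrix n n R) : Matrix n n R :=
  V - V * vecMulVec p p - vecMulVec p p * V + (p ⬝ᵥ V *ᵥ p) • vecMulVec p p -
    ((V.trace - p ⬝ᵥ V *ᵥ p) / (Fintype.card n - 1)) • (1 - vecMulVec p p)

variable {p : n → R} {V : Matrix n n R}

theorem isSymm_projUp (hV : V.IsSymm) : (projUp p V).IsSymm := by
  have hP : (vecMulVec p p).IsSymm := transpose_vecMulVec p p
  simp only [projUp, IsSymm, transpose_sub, transpose_add, transpose_smul, transpose_mul,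
    transpose_one, hP.eq, hV.eq]
  abel

theorem projUp_mulVec_self (hp : p ⬝ᵥ p = 1) : projUp p V *ᵥ p = 0 := by
  simp only [projUp, sub_mulVec, add_mulVec, smul_mulVec, one_mulVec, ← mulVec_mulVec,
    vecMulVec_self_mulVec_self hp, vecMulVec_mulVec]
  simp

theorem trace_projUp (hp : p ⬝ᵥ p = 1) (hn : (Fintype.card n : R) ≠ 1) :
    (projUp p V).trace = 0 := by
  have hn' : (Fintype.card n : R) - 1 ≠ 0 := sub_ne_zero.mpr hn
  simp only [projUp, trace_sub, trace_add, trace_smul, trace_one, trace_vecMulVec, hp,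
    trace_mul_vecMulVec_self, trace_mul_comm (vecMulVec p p) V, smul_eq_mul]
  field_simp
  ring

theorem trace_projUp_mul {Q : Matrix n n R} (hQ : Q.IsSymm) (hQt : Q.trace = 0)
    (hQp : Q *ᵥ p = 0) : (projUp p V * Q).trace = (V * Q).trace := by
  have hQP : Q * vecMulVec p p = 0 := by rw [mul_vecMulVec, hQp, zero_vecMulVec]
  have hPQ : vecMulVec p p * Q = 0 := by
    rw [vecMulVec_mul, ← hQ.eq, vecMul_transpose, hQp, vecMulVec_zero]
  simp only [projUp, sub_mul, add_mul, smul_mul_assoc, one_mul, Matrix.mul_assoc, hQP, hPQ,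
    trace_sub, trace_add, trace_smul, mul_zero, trace_zero, hQt,
    trace_mul_comm (vecMulVec p p) (V * Q)]
  simp

end Matrix

/-- The explicit formula Y gives the Frobenius-orthogonal projection of a symmetric
matrix V onto 𝒰_{p₀} = {U symmetric, tr U = 0, U p₀ = 0}: Y lies in 𝒰_{p₀} and
V : Q = Y : Q for all Q ∈ 𝒰_{p₀}. -/
theorem projection_onto_Up (p₀ : Fin 3 → ℝ) (hp₀ : ∑ i, (p₀ i) ^ 2 = 1)
    (V : Matrix (Fin 3) (Fin 3) ℝ) (hV : V.IsSymm)
    (Y : Matrix (Fin 3) (Fin 3) ℝ)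
    (hY : Y = V - V * vecMulVec p₀ p₀ - vecMulVec p₀ p₀ * V +
        (∑ i, ∑ j, V i j * vecMulVec p₀ p₀ i j) • vecMulVec p₀ p₀ -
        ((∑ i, ∑ j, V i j * ((1 : Matrix (Fin 3) (Fin 3) ℝ) - vecMulVec p₀ p₀) i j) / 2) •
          ((1 : Matrix (Fin 3) (Fin 3) ℝ) - vecMulVec p₀ p₀)) :
    Y.IsSymm ∧ Y.trace = 0 ∧ Y.mulVec p₀ = 0 ∧
    ∀ Q : Matrix (Fin 3) (Fin 3) ℝ, Q.IsSymm → Q.trace = 0 → Q.mulVec p₀ = 0 →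
      (∑ i, ∑ j, V i j * Q i j) = ∑ i, ∑ j, Y i j * Q i j := by
  have hp : p₀ ⬝ᵥ p₀ = 1 := by simpa [dotProduct, sq] using hp₀
  have hYV : Y = projUp p₀ V := by
    rw [hY, projUp, hV.sum_sum_mul_eq_trace_mul, hV.sum_sum_mul_eq_trace_mul, mul_sub, mul_one,
      trace_sub, trace_mul_vecMulVec_self]
    norm_num
  have hYs : Y.IsSymm := hYV ▸ isSymm_projUp hV
  refine ⟨hYs, hYV ▸ trace_projUp hp (by norm_num), hYV ▸ projUp_mulVec_self hp,
    fun Q hQ hQt hQp => ?_⟩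
  rw [hV.sum_sum_mul_eq_trace_mul, hYs.sum_sum_mul_eq_trace_mul, hYV, trace_projUp_mul hQ hQt hQp]
end
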